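/- Assume U continuous with 0 < U₁ ≤ U(x,ξ) ≤ U₂ on [ε, ħω_D]² and fix T ∈ [0, τ₂]. Then there exists u₀ ∈ V_T satisfying the BCS gap equation u₀(x) = ∫_ε^{ħω_D} U(x,ξ)(u₀(ξ)/√(ξ²+u₀(ξ)²)) tanh(√(ξ²+u₀(ξ)²)/(2T)) dξ for all x ∈ [ε, ħω_D]; in particular Δ₁(T) ≤ u₀(x) ≤ Δ₂(T) for all x. -/

import Mathlib

/-- The tanh factor tanh(r/(2T)), interpreted as 1 at T = 0. -/
noncomputable def tanhFac (T r : ℝ) : ℝ :=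
  if T = 0 then 1 else Real.tanh (r / (2 * T))

/-!
Write the gap equation as `u = A u` with `A u x = ∫ U x ξ * g ξ (u ξ) dξ`, where
`g ξ t = t * tanh (E / 2T) / E` (`gapTerm`) and `E = √(ξ² + t²)`. Since `g ξ` increases on `t ≥ 0` and `U ≥ 0`,
`A` is monotone. Since `tanh (E / 2T) / E` decreases in `E`, the constants `Δ₁` and `Δ₂`, which
solve the gap equations with the constant couplings `U₁ ≤ U` and `U₂ ≥ U`, are a sub- and a
supersolution of `u = A u`, and `Δ₁ ≤ Δ₂`. Iterating `A` from `Δ₂` then gives a decreasing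
sequence bounded below by `Δ₁`. By dominated convergence its pointwise limit is a fixed point,
and it is continuous because `A` maps bounded measurable functions to continuous ones. This
monotone iteration replaces the Schauder fixed-point argument.
-/

open MeasureTheory Filter Topology Set

namespace Real

theorem hasDerivAt_tanh (x : ℝ) : HasDerivAt tanh (1 / cosh x ^ 2) x := by
  have h := (hasDerivAt_sinh x).div (hasDerivAt_cosh x) (cosh_pos x).ne'
  rw [show tanh = fun y => sinh y / cosh y from funext tanh_eq_sinh_div_cosh]
  refine h.congr_deriv ?_
  rw [← cosh_sq_sub_sinh_sq x]
  ring

theorem continuous_tanh : Continuous tanh :=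
  continuous_iff_continuousAt.2 fun x => (hasDerivAt_tanh x).continuousAt

theorem monotone_tanh : Monotone tanh :=
  monotone_of_deriv_nonneg (fun x => (hasDerivAt_tanh x).differentiableAt)
    fun x => (hasDerivAt_tanh x).deriv ▸ by positivity

theorem tanh_nonneg {x : ℝ} (hx : 0 ≤ x) : 0 ≤ tanh x :=
  tanh_zero ▸ monotone_tanh hx

/-- The derivative of `tanh s / s` has the sign of `s - sinh s * cosh s`. -/
theorem antitoneOn_tanh_div_self : AntitoneOn (fun s => tanh s / s) (Ioi 0) := by
  have hd : ∀ x ∈ Ioi (0 : ℝ), HasDerivAt (fun s => tanh s / s)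
      ((1 / cosh x ^ 2 * x - tanh x * 1) / x ^ 2) x :=
    fun x hx => (hasDerivAt_tanh x).div (hasDerivAt_id x) (ne_of_gt hx)
  refine antitoneOn_of_deriv_nonpos (convex_Ioi 0)
    (fun x hx => (hd x hx).continuousAt.continuousWithinAt) ?_ ?_
  · rw [interior_Ioi]
    exact fun x hx => (hd x hx).differentiableAt.differentiableWithinAt
  · rw [interior_Ioi]
    intro x hx
    rw [(hd x hx).deriv]
    refine div_nonpos_of_nonpos_of_nonneg ?_ (sq_nonneg x)
    have hsinh : x ≤ sinh x := self_le_sinh_iff.2 (le_of_lt hx)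
    have hx_le : x ≤ sinh x * cosh x := by
      nlinarith [one_le_cosh x, sinh_nonneg_iff.2 (le_of_lt hx)]
    rw [tanh_eq_sinh_div_cosh, sub_nonpos, mul_one, div_mul_eq_mul_div,
      div_le_div_iff₀ (by positivity) (cosh_pos x)]
    nlinarith [cosh_pos x]

end Real

section tanhFac

variable {T r : ℝ}

theorem tanhFac_nonneg (hT : 0 ≤ T) (hr : 0 ≤ r) : 0 ≤ tanhFac T r := by
  unfold tanhFac
  split_ifs
  · exact zero_le_one
  · exact Real.tanh_nonneg (by positivity)

theorem tanhFac_le_one (T r : ℝ) : tanhFac T r ≤ 1 := by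
  unfold tanhFac
  split_ifs
  · exact le_rfl
  · exact (Real.tanh_lt_one _).le

theorem monotone_tanhFac (hT : 0 ≤ T) : Monotone (tanhFac T) := by
  intro r₁ r₂ h
  unfold tanhFac
  split_ifs with hT0
  · exact le_rfl
  · have : 0 < 2 * T := by positivity
    exact Real.monotone_tanh (by gcongr)

theorem continuous_tanhFac (T : ℝ) : Continuous (tanhFac T) := by
  unfold tanhFac
  split_ifs
  · exact continuous_const
  · exact Real.continuous_tanh.comp (continuous_id.div_const _)

theorem antitoneOn_tanhFac_div_self (hT : 0 ≤ T) :
    AntitoneOn (fun r => tanhFac T r / r) (Ioi 0) := by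
  intro r₁ (h₁ : 0 < r₁) r₂ (h₂ : 0 < r₂) h
  unfold tanhFac
  split_ifs with hT0
  · exact one_div_le_one_div_of_le h₁ h
  · have hT' : 0 < 2 * T := by positivity
    have key := Real.antitoneOn_tanh_div_self (div_pos h₁ hT') (div_pos h₂ hT')
      (div_le_div_of_nonneg_right h hT'.le)
    have e : ∀ r, 0 < r → Real.tanh (r / (2 * T)) / r =
        Real.tanh (r / (2 * T)) / (r / (2 * T)) / (2 * T) := fun r hr => by field_simp
    simp only at key ⊢
    rw [e r₁ h₁, e r₂ h₂]
    exact div_le_div_of_nonneg_right key hT'.le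

end tanhFac

noncomputable def gapWeight (T ξ t : ℝ) : ℝ :=
  1 / √(ξ ^ 2 + t ^ 2) * tanhFac T √(ξ ^ 2 + t ^ 2)

noncomputable def gapTerm (T ξ t : ℝ) : ℝ :=
  t * gapWeight T ξ t

section gapWeight

variable {T ξ t : ℝ}

theorem gapTerm_eq (T ξ t : ℝ) :
    gapTerm T ξ t = t / √(ξ ^ 2 + t ^ 2) * tanhFac T √(ξ ^ 2 + t ^ 2) := by
  rw [gapTerm, gapWeight, ← mul_assoc, mul_one_div]

theorem gapWeight_nonneg (hT : 0 ≤ T) : 0 ≤ gapWeight T ξ t :=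
  mul_nonneg (by positivity) (tanhFac_nonneg hT (Real.sqrt_nonneg _))

theorem antitoneOn_gapWeight (hT : 0 ≤ T) (hξ : 0 < ξ) : AntitoneOn (gapWeight T ξ) (Ici 0) := by
  intro a (ha : 0 ≤ a) b _ hab
  have hE : 0 < √(ξ ^ 2 + a ^ 2) := Real.sqrt_pos.2 (by positivity)
  have hEle : √(ξ ^ 2 + a ^ 2) ≤ √(ξ ^ 2 + b ^ 2) :=
    Real.sqrt_le_sqrt (by nlinarith)
  simpa only [gapWeight, one_div_mul_eq_div] using
    antitoneOn_tanhFac_div_self hT hE (hE.trans_le hEle) hEle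

theorem gapTerm_nonneg (hT : 0 ≤ T) (ht : 0 ≤ t) : 0 ≤ gapTerm T ξ t :=
  mul_nonneg ht (gapWeight_nonneg hT)

theorem gapTerm_le_one (hT : 0 ≤ T) : gapTerm T ξ t ≤ 1 := by
  have hdiv : t / √(ξ ^ 2 + t ^ 2) ≤ 1 :=
    div_le_one_of_le₀ (Real.le_sqrt_of_sq_le (by nlinarith)) (Real.sqrt_nonneg _)
  calc gapTerm T ξ t = t / √(ξ ^ 2 + t ^ 2) * tanhFac T √(ξ ^ 2 + t ^ 2) := gapTerm_eq T ξ t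
    _ ≤ 1 * 1 := mul_le_mul hdiv (tanhFac_le_one _ _) (tanhFac_nonneg hT (Real.sqrt_nonneg _))
        zero_le_one
    _ = 1 := one_mul 1

/-- `t / √(ξ² + t²)` increases with `t ≥ 0`, as `t² (ξ² + s²) ≤ s² (ξ² + t²)` for `t ≤ s`. -/
theorem monotoneOn_gapTerm (hT : 0 ≤ T) (hξ : 0 < ξ) : MonotoneOn (gapTerm T ξ) (Ici 0) := by
  intro a (ha : 0 ≤ a) b (hb : 0 ≤ b) hab
  have hEa : 0 < √(ξ ^ 2 + a ^ 2) := Real.sqrt_pos.2 (by positivity)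
  have hEb : 0 < √(ξ ^ 2 + b ^ 2) := Real.sqrt_pos.2 (by positivity)
  have hdiv : a / √(ξ ^ 2 + a ^ 2) ≤ b / √(ξ ^ 2 + b ^ 2) := by
    rw [div_le_div_iff₀ hEa hEb, ← pow_le_pow_iff_left₀ (by positivity) (by positivity) two_ne_zero, mul_pow, mul_pow,
      Real.sq_sqrt (by positivity), Real.sq_sqrt (by positivity)]
    nlinarith [mul_le_mul hab hab ha hb]
  have hEle : √(ξ ^ 2 + a ^ 2) ≤ √(ξ ^ 2 + b ^ 2) := Real.sqrt_le_sqrt (by nlinarith)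
  calc gapTerm T ξ a = a / √(ξ ^ 2 + a ^ 2) * tanhFac T √(ξ ^ 2 + a ^ 2) := gapTerm_eq T ξ a
    _ ≤ b / √(ξ ^ 2 + b ^ 2) * tanhFac T √(ξ ^ 2 + b ^ 2) :=
        mul_le_mul hdiv (monotone_tanhFac hT hEle) (tanhFac_nonneg hT hEa.le) (by positivity)
    _ = gapTerm T ξ b := (gapTerm_eq T ξ b).symm

theorem continuous_gapTerm (T : ℝ) (hξ : ξ ≠ 0) : Continuous (gapTerm T ξ) := by
  have hE : Continuous fun t : ℝ => √(ξ ^ 2 + t ^ 2) := by fun_prop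
  exact continuous_id.mul ((continuous_const.div hE
    fun t => (Real.sqrt_pos.2 (by positivity)).ne').mul ((continuous_tanhFac T).comp hE))

theorem continuousOn_gapWeight_left (T t : ℝ) :
    ContinuousOn (fun ξ => gapWeight T ξ t) (Ioi 0) := by
  have hE : Continuous fun ξ : ℝ => √(ξ ^ 2 + t ^ 2) := by fun_prop
  exact (continuousOn_const.div hE.continuousOn
    fun ξ (hξ : 0 < ξ) => (Real.sqrt_pos.2 (by positivity)).ne').mul
    ((continuous_tanhFac T).comp hE).continuousOn

theorem measurable_gapTerm (T : ℝ) : Measurable fun p : ℝ × ℝ => gapTerm T p.1 p.2 := by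
  have := (continuous_tanhFac T).measurable
  unfold gapTerm gapWeight
  fun_prop

end gapWeight

open scoped Interval

theorem uIoc_subset_Icc {a b : ℝ} (h : a ≤ b) : Ι a b ⊆ Icc a b :=
  uIcc_of_le h ▸ uIoc_subset_uIcc

theorem ContinuousOn.aestronglyMeasurable_uIoc {f : ℝ → ℝ} {a b : ℝ} (hf : ContinuousOn f (Icc a b))
    (h : a ≤ b) : AEStronglyMeasurable f (volume.restrict (Ι a b)) :=
  (hf.aestronglyMeasurable measurableSet_Icc).mono_measure
    (Measure.restrict_mono (uIoc_subset_Icc h) le_rfl)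

noncomputable def gapOperator (U : ℝ → ℝ → ℝ) (T ε ω : ℝ) (v : ℝ → ℝ) (x : ℝ) : ℝ :=
  ∫ ξ in ε..ω, U x ξ * gapTerm T ξ (v ξ)

section gapOperator

variable {U : ℝ → ℝ → ℝ} {T ε ω M : ℝ} {v w : ℝ → ℝ} {x : ℝ}

theorem exists_norm_kernel_le
    (hU : ContinuousOn (fun p : ℝ × ℝ => U p.1 p.2) (Icc ε ω ×ˢ Icc ε ω)) :
    ∃ M, ∀ x ∈ Icc ε ω, ∀ ξ ∈ Icc ε ω, ‖U x ξ‖ ≤ M := by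
  obtain ⟨M, hM⟩ := (isCompact_Icc.prod isCompact_Icc).exists_bound_of_continuousOn hU
  exact ⟨M, fun x hx ξ hξ => hM (x, ξ) ⟨hx, hξ⟩⟩

theorem norm_mul_gapTerm_le {u ξ t : ℝ} (hT : 0 ≤ T) (ht : 0 ≤ t) (hu : ‖u‖ ≤ M) :
    ‖u * gapTerm T ξ t‖ ≤ M := by
  have hg : ‖gapTerm T ξ t‖ ≤ 1 := by
    rw [Real.norm_of_nonneg (gapTerm_nonneg hT ht)]
    exact gapTerm_le_one hT
  simpa only [norm_mul, mul_one] using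
    mul_le_mul hu hg (norm_nonneg _) ((norm_nonneg u).trans hu)

theorem continuousOn_kernel_right
    (hU : ContinuousOn (fun p : ℝ × ℝ => U p.1 p.2) (Icc ε ω ×ˢ Icc ε ω)) (hx : x ∈ Icc ε ω) :
    ContinuousOn (U x) (Icc ε ω) :=
  hU.comp (Continuous.prodMk_right x).continuousOn fun _ hξ => ⟨hx, hξ⟩

theorem continuousOn_kernel_left
    (hU : ContinuousOn (fun p : ℝ × ℝ => U p.1 p.2) (Icc ε ω ×ˢ Icc ε ω)) {ξ : ℝ}
    (hξ : ξ ∈ Icc ε ω) : ContinuousOn (fun x => U x ξ) (Icc ε ω) :=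
  hU.comp (Continuous.prodMk_left ξ).continuousOn fun _ hx => ⟨hx, hξ⟩

theorem aestronglyMeasurable_gapOperator_integrand (hεω : ε ≤ ω)
    (hU : ContinuousOn (fun p : ℝ × ℝ => U p.1 p.2) (Icc ε ω ×ˢ Icc ε ω)) (hx : x ∈ Icc ε ω)
    (hv : AEMeasurable v (volume.restrict (Ι ε ω))) :
    AEStronglyMeasurable (fun ξ => U x ξ * gapTerm T ξ (v ξ)) (volume.restrict (Ι ε ω)) :=
  ((continuousOn_kernel_right hU hx).aestronglyMeasurable_uIoc hεω).mul
    ((measurable_gapTerm T).comp_aemeasurable (aemeasurable_id.prodMk hv)).aestronglyMeasurable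

theorem intervalIntegrable_gapOperator_integrand (hεω : ε ≤ ω) (hT : 0 ≤ T)
    (hU : ContinuousOn (fun p : ℝ × ℝ => U p.1 p.2) (Icc ε ω ×ˢ Icc ε ω)) (hx : x ∈ Icc ε ω)
    (hv : AEMeasurable v (volume.restrict (Ι ε ω))) (hv0 : ∀ ξ ∈ Icc ε ω, 0 ≤ v ξ) :
    IntervalIntegrable (fun ξ => U x ξ * gapTerm T ξ (v ξ)) volume ε ω := by
  obtain ⟨M, hM⟩ := exists_norm_kernel_le hU
  refine (intervalIntegrable_const (c := M)).mono_fun'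
    (aestronglyMeasurable_gapOperator_integrand hεω hU hx hv) ?_
  refine (ae_restrict_iff' measurableSet_uIoc).2 (ae_of_all _ fun ξ hξ => ?_)
  have hξ' := uIoc_subset_Icc hεω hξ
  exact norm_mul_gapTerm_le hT (hv0 ξ hξ') (hM x hx ξ hξ')

theorem gapOperator_mono (hε : 0 < ε) (hεω : ε ≤ ω) (hT : 0 ≤ T)
    (hU : ContinuousOn (fun p : ℝ × ℝ => U p.1 p.2) (Icc ε ω ×ˢ Icc ε ω))
    (hU0 : ∀ x ∈ Icc ε ω, ∀ ξ ∈ Icc ε ω, 0 ≤ U x ξ)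
    (hv : AEMeasurable v (volume.restrict (Ι ε ω))) (hw : AEMeasurable w (volume.restrict (Ι ε ω)))
    (hv0 : ∀ ξ ∈ Icc ε ω, 0 ≤ v ξ) (hvw : ∀ ξ ∈ Icc ε ω, v ξ ≤ w ξ) (hx : x ∈ Icc ε ω) :
    gapOperator U T ε ω v x ≤ gapOperator U T ε ω w x := by
  have hw0 : ∀ ξ ∈ Icc ε ω, 0 ≤ w ξ := fun ξ hξ => (hv0 ξ hξ).trans (hvw ξ hξ)
  refine intervalIntegral.integral_mono_on hεω
    (intervalIntegrable_gapOperator_integrand hεω hT hU hx hv hv0)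
    (intervalIntegrable_gapOperator_integrand hεω hT hU hx hw hw0) fun ξ hξ => ?_
  exact mul_le_mul_of_nonneg_left
    (monotoneOn_gapTerm hT (hε.trans_le hξ.1) (hv0 ξ hξ) (hw0 ξ hξ) (hvw ξ hξ)) (hU0 x hx ξ hξ)

theorem continuousOn_gapOperator (hεω : ε ≤ ω) (hT : 0 ≤ T)
    (hU : ContinuousOn (fun p : ℝ × ℝ => U p.1 p.2) (Icc ε ω ×ˢ Icc ε ω))
    (hv : AEMeasurable v (volume.restrict (Ι ε ω))) (hv0 : ∀ ξ ∈ Icc ε ω, 0 ≤ v ξ) :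
    ContinuousOn (gapOperator U T ε ω v) (Icc ε ω) := by
  obtain ⟨M, hM⟩ := exists_norm_kernel_le hU
  intro x₀ hx₀
  refine intervalIntegral.continuousWithinAt_of_dominated_interval (bound := fun _ => M)
    ?_ ?_ intervalIntegrable_const ?_
  · filter_upwards [self_mem_nhdsWithin] with x hx
    exact aestronglyMeasurable_gapOperator_integrand hεω hU hx hv
  · filter_upwards [self_mem_nhdsWithin] with x hx
    refine ae_of_all _ fun ξ hξ => ?_
    have hξ' := uIoc_subset_Icc hεω hξ
    exact norm_mul_gapTerm_le hT (hv0 ξ hξ') (hM x hx ξ hξ')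
  · exact ae_of_all _ fun ξ hξ =>
      (continuousOn_kernel_left hU (uIoc_subset_Icc hεω hξ) x₀ hx₀).mul continuousWithinAt_const

theorem tendsto_gapOperator {v : ℕ → ℝ → ℝ} {v₀ : ℝ → ℝ} (hε : 0 < ε) (hεω : ε ≤ ω) (hT : 0 ≤ T)
    (hU : ContinuousOn (fun p : ℝ × ℝ => U p.1 p.2) (Icc ε ω ×ˢ Icc ε ω))
    (hv : ∀ n, AEMeasurable (v n) (volume.restrict (Ι ε ω)))
    (hv0 : ∀ n, ∀ ξ ∈ Icc ε ω, 0 ≤ v n ξ)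
    (hlim : ∀ ξ ∈ Icc ε ω, Tendsto (fun n => v n ξ) atTop (𝓝 (v₀ ξ))) (hx : x ∈ Icc ε ω) :
    Tendsto (fun n => gapOperator U T ε ω (v n) x) atTop (𝓝 (gapOperator U T ε ω v₀ x)) := by
  obtain ⟨M, hM⟩ := exists_norm_kernel_le hU
  refine intervalIntegral.tendsto_integral_filter_of_dominated_convergence (fun _ => M)
    (Eventually.of_forall fun n => aestronglyMeasurable_gapOperator_integrand hεω hU hx (hv n))
    (Eventually.of_forall fun n => ae_of_all _ fun ξ hξ => ?_) intervalIntegrable_const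
    (ae_of_all _ fun ξ hξ => ?_)
  · have hξ' := uIoc_subset_Icc hεω hξ
    exact norm_mul_gapTerm_le hT (hv0 n ξ hξ') (hM x hx ξ hξ')
  · have hξ' := uIoc_subset_Icc hεω hξ
    exact tendsto_const_nhds.mul
      (((continuous_gapTerm T (hε.trans_le hξ'.1).ne').tendsto _).comp (hlim ξ hξ'))

end gapOperator

def continuousOrderInterval (ε ω a b : ℝ) : Set (ℝ → ℝ) :=
  {u | ContinuousOn u (Icc ε ω) ∧ ∀ x ∈ Icc ε ω, a ≤ u x ∧ u x ≤ b}

section fixedPoint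

variable {U : ℝ → ℝ → ℝ} {T ε ω a b : ℝ}

theorem mapsTo_gapOperator (hε : 0 < ε) (hεω : ε ≤ ω) (hT : 0 ≤ T)
    (hU : ContinuousOn (fun p : ℝ × ℝ => U p.1 p.2) (Icc ε ω ×ˢ Icc ε ω))
    (hU0 : ∀ x ∈ Icc ε ω, ∀ ξ ∈ Icc ε ω, 0 ≤ U x ξ) (ha : 0 ≤ a)
    (hsub : ∀ x ∈ Icc ε ω, a ≤ gapOperator U T ε ω (fun _ => a) x)
    (hsuper : ∀ x ∈ Icc ε ω, gapOperator U T ε ω (fun _ => b) x ≤ b) :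
    MapsTo (gapOperator U T ε ω) (continuousOrderInterval ε ω a b)
      (continuousOrderInterval ε ω a b) := by
  rintro u ⟨hu, hab⟩
  have hum := (hu.aestronglyMeasurable_uIoc hεω).aemeasurable
  have hu0 : ∀ ξ ∈ Icc ε ω, 0 ≤ u ξ := fun ξ hξ => ha.trans (hab ξ hξ).1
  refine ⟨continuousOn_gapOperator hεω hT hU hum hu0, fun x hx => ⟨?_, ?_⟩⟩
  · exact (hsub x hx).trans (gapOperator_mono hε hεω hT hU hU0 aemeasurable_const hum
      (fun _ _ => ha) (fun ξ hξ => (hab ξ hξ).1) hx)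
  · exact (gapOperator_mono hε hεω hT hU hU0 hum aemeasurable_const hu0
      (fun ξ hξ => (hab ξ hξ).2) hx).trans (hsuper x hx)

theorem exists_fixedPoint_gapOperator (hε : 0 < ε) (hεω : ε ≤ ω) (hT : 0 ≤ T)
    (hU : ContinuousOn (fun p : ℝ × ℝ => U p.1 p.2) (Icc ε ω ×ˢ Icc ε ω))
    (hU0 : ∀ x ∈ Icc ε ω, ∀ ξ ∈ Icc ε ω, 0 ≤ U x ξ) (ha : 0 ≤ a) (hab : a ≤ b)
    (hsub : ∀ x ∈ Icc ε ω, a ≤ gapOperator U T ε ω (fun _ => a) x)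
    (hsuper : ∀ x ∈ Icc ε ω, gapOperator U T ε ω (fun _ => b) x ≤ b) :
    ∃ u ∈ continuousOrderInterval ε ω a b, ∀ x ∈ Icc ε ω, u x = gapOperator U T ε ω u x := by
  set A := gapOperator U T ε ω
  set u : ℕ → ℝ → ℝ := fun n => A^[n] fun _ => b
  have hmem : ∀ n, u n ∈ continuousOrderInterval ε ω a b := fun n =>
    (mapsTo_gapOperator hε hεω hT hU hU0 ha hsub hsuper).iterate n
      ⟨continuousOn_const, fun _ _ => ⟨hab, le_rfl⟩⟩
  have hum : ∀ n, AEMeasurable (u n) (volume.restrict (Ι ε ω)) := fun n =>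
    ((hmem n).1.aestronglyMeasurable_uIoc hεω).aemeasurable
  have hu0 : ∀ n, ∀ ξ ∈ Icc ε ω, 0 ≤ u n ξ := fun n ξ hξ => ha.trans ((hmem n).2 ξ hξ).1
  have hsucc : ∀ n, u (n + 1) = A (u n) := fun n => Function.iterate_succ_apply' A n _
  have hdecr : ∀ n, ∀ x ∈ Icc ε ω, u (n + 1) x ≤ u n x := by
    intro n
    induction n with
    | zero => exact hsuper
    | succ n ih =>
      intro x hx
      calc u (n + 1 + 1) x = A (u (n + 1)) x := by rw [hsucc]
        _ ≤ A (u n) x := gapOperator_mono hε hεω hT hU hU0 (hum _) (hum _) (hu0 _) ih hx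
        _ = u (n + 1) x := by rw [hsucc]
  have hlim : ∀ x ∈ Icc ε ω, Tendsto (fun n => u n x) atTop (𝓝 (⨅ n, u n x)) := fun x hx =>
    tendsto_atTop_ciInf (antitone_nat_of_succ_le fun n => hdecr n x hx)
      ⟨a, forall_mem_range.2 fun n => ((hmem n).2 x hx).1⟩
  set u₀ : ℝ → ℝ := fun x => ⨅ n, u n x
  have hbounds : ∀ x ∈ Icc ε ω, a ≤ u₀ x ∧ u₀ x ≤ b := fun x hx =>
    ⟨ge_of_tendsto' (hlim x hx) fun n => ((hmem n).2 x hx).1,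
      le_of_tendsto' (hlim x hx) fun n => ((hmem n).2 x hx).2⟩
  have hfix : ∀ x ∈ Icc ε ω, u₀ x = A u₀ x := fun x hx =>
    tendsto_nhds_unique ((hlim x hx).comp (tendsto_add_atTop_nat 1))
      (by simpa only [Function.comp_def, hsucc] using
        tendsto_gapOperator hε hεω hT hU hum hu0 hlim hx)
  have hu₀0 : ∀ ξ ∈ Icc ε ω, 0 ≤ u₀ ξ := fun ξ hξ => ha.trans (hbounds ξ hξ).1
  exact ⟨u₀, ⟨(continuousOn_gapOperator hεω hT hU (AEMeasurable.iInf hum) hu₀0).congr hfix,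
    hbounds⟩, hfix⟩

end fixedPoint

noncomputable def gapIntegral (T ε ω c : ℝ) : ℝ :=
  ∫ ξ in ε..ω, gapWeight T ξ c

section gapIntegral

variable {U : ℝ → ℝ → ℝ} {T ε ω U₁ U₂ a b c : ℝ}

theorem antitoneOn_gapIntegral (hε : 0 < ε) (hεω : ε ≤ ω) (hT : 0 ≤ T) :
    AntitoneOn (gapIntegral T ε ω) (Ici 0) := by
  have hint : ∀ c, IntervalIntegrable (fun ξ => gapWeight T ξ c) volume ε ω := fun c =>
    ((continuousOn_gapWeight_left T c).mono fun ξ hξ =>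
      hε.trans_le (uIcc_of_le hεω ▸ hξ : ξ ∈ Icc ε ω).1).intervalIntegrable
  exact fun c hc d hd hcd => intervalIntegral.integral_mono_on hεω (hint d) (hint c)
    fun ξ hξ => antitoneOn_gapWeight hT (hε.trans_le hξ.1) hc hd hcd

theorem gapIntegral_zero (hε : 0 ≤ ε) (hεω : ε ≤ ω) (hT : T ≠ 0) :
    gapIntegral T ε ω 0 = ∫ ξ in ε..ω, 1 / ξ * Real.tanh (ξ / (2 * T)) := by
  refine intervalIntegral.integral_congr fun ξ hξ => ?_
  rw [uIcc_of_le hεω] at hξ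
  simp only [gapWeight, tanhFac, if_neg hT, ne_eq, OfNat.ofNat_ne_zero, not_false_eq_true,
    zero_pow, add_zero, Real.sqrt_sq (hε.trans hξ.1)]

theorem le_of_gapIntegral_eq (hε : 0 < ε) (hεω : ε ≤ ω) (hT : 0 ≤ T) (hU₁ : 0 < U₁)
    (hU₁₂ : U₁ < U₂) (hb : 0 ≤ b) (ha_eq : 1 = U₁ * gapIntegral T ε ω a)
    (hb_eq : 1 = U₂ * gapIntegral T ε ω b) : a ≤ b := by
  by_contra! hba
  have hIa : 0 < gapIntegral T ε ω a := pos_of_mul_pos_right (ha_eq ▸ one_pos) hU₁.le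
  have hI : gapIntegral T ε ω a ≤ gapIntegral T ε ω b :=
    antitoneOn_gapIntegral hε hεω hT hb (hb.trans hba.le) hba.le
  nlinarith

theorem integral_const_mul_gapTerm (K : ℝ) :
    ∫ ξ in ε..ω, K * gapTerm T ξ c = c * (K * gapIntegral T ε ω c) := by
  simp only [gapTerm, gapIntegral, intervalIntegral.integral_const_mul]
  ring

theorem le_gapOperator_const (hεω : ε ≤ ω) (hT : 0 ≤ T)
    (hU : ContinuousOn (fun p : ℝ × ℝ => U p.1 p.2) (Icc ε ω ×ˢ Icc ε ω))
    (hU₁ : ∀ x ∈ Icc ε ω, ∀ ξ ∈ Icc ε ω, U₁ ≤ U x ξ) (hc : 0 ≤ c)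
    (hsub : c ≤ c * (U₁ * gapIntegral T ε ω c)) {x : ℝ} (hx : x ∈ Icc ε ω) :
    c ≤ gapOperator U T ε ω (fun _ => c) x := by
  refine hsub.trans ?_
  rw [← integral_const_mul_gapTerm]
  exact intervalIntegral.integral_mono_on hεω
    (intervalIntegrable_gapOperator_integrand (U := fun _ _ => U₁) hεω hT continuousOn_const hx
      aemeasurable_const fun _ _ => hc)
    (intervalIntegrable_gapOperator_integrand hεω hT hU hx aemeasurable_const fun _ _ => hc)
    fun ξ hξ => mul_le_mul_of_nonneg_right (hU₁ x hx ξ hξ) (gapTerm_nonneg hT hc)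

theorem gapOperator_const_le (hεω : ε ≤ ω) (hT : 0 ≤ T)
    (hU : ContinuousOn (fun p : ℝ × ℝ => U p.1 p.2) (Icc ε ω ×ˢ Icc ε ω))
    (hU₂ : ∀ x ∈ Icc ε ω, ∀ ξ ∈ Icc ε ω, U x ξ ≤ U₂) (hc : 0 ≤ c)
    (hsuper : c * (U₂ * gapIntegral T ε ω c) ≤ c) {x : ℝ} (hx : x ∈ Icc ε ω) :
    gapOperator U T ε ω (fun _ => c) x ≤ c := by
  refine le_trans ?_ hsuper
  rw [← integral_const_mul_gapTerm]
  exact intervalIntegral.integral_mono_on hεω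
    (intervalIntegrable_gapOperator_integrand hεω hT hU hx aemeasurable_const fun _ _ => hc)
    (intervalIntegrable_gapOperator_integrand (U := fun _ _ => U₂) hεω hT continuousOn_const hx
      aemeasurable_const fun _ _ => hc)
    fun ξ hξ => mul_le_mul_of_nonneg_right (hU₂ x hx ξ hξ) (gapTerm_nonneg hT hc)

end gapIntegral

theorem stmt14_general (U₁ U₂ ε ω τ₁ τ₂ : ℝ) (hε : 0 < ε) (hεω : ε < ω)
    (hU₁ : 0 < U₁) (hU₁₂ : U₁ < U₂)
    (U : ℝ → ℝ → ℝ)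
    (hUcont : ContinuousOn (fun p : ℝ × ℝ => U p.1 p.2) (Set.Icc ε ω ×ˢ Set.Icc ε ω))
    (hUbd : ∀ x ∈ Set.Icc ε ω, ∀ ξ ∈ Set.Icc ε ω, U₁ ≤ U x ξ ∧ U x ξ ≤ U₂)
    (hτ₂pos : 0 < τ₂)
    (hτ₂ : 1 = U₂ * ∫ ξ in ε..ω, (1 / ξ) * Real.tanh (ξ / (2 * τ₂)))
    (T Δ₁ Δ₂ : ℝ) (hT : 0 ≤ T) (hTτ₂ : T ≤ τ₂)
    (hΔ₁nonneg : 0 ≤ Δ₁) (hΔ₂nonneg : 0 ≤ Δ₂)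
    (hΔ₁eq : T < τ₁ →
      1 = U₁ * ∫ ξ in ε..ω,
        (1 / Real.sqrt (ξ ^ 2 + Δ₁ ^ 2)) * tanhFac T (Real.sqrt (ξ ^ 2 + Δ₁ ^ 2)))
    (hΔ₁zero : τ₁ ≤ T → Δ₁ = 0)
    (hΔ₂eq : T < τ₂ →
      1 = U₂ * ∫ ξ in ε..ω,
        (1 / Real.sqrt (ξ ^ 2 + Δ₂ ^ 2)) * tanhFac T (Real.sqrt (ξ ^ 2 + Δ₂ ^ 2)))
    (hΔ₂zero : τ₂ ≤ T → Δ₂ = 0) :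
    ∃ u₀ : ℝ → ℝ, ContinuousOn u₀ (Set.Icc ε ω) ∧
      (∀ x ∈ Set.Icc ε ω, Δ₁ ≤ u₀ x ∧ u₀ x ≤ Δ₂) ∧
      ∀ x ∈ Set.Icc ε ω,
        u₀ x = ∫ ξ in ε..ω,
          U x ξ * (u₀ ξ / Real.sqrt (ξ ^ 2 + u₀ ξ ^ 2)) *
            tanhFac T (Real.sqrt (ξ ^ 2 + u₀ ξ ^ 2)) := by
  -- at `T = τ₂` the gap `Δ₂` vanishes and its gap equation is the one defining `τ₂`
  have hgap₂ : 1 = U₂ * gapIntegral T ε ω Δ₂ := by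
    rcases hTτ₂.lt_or_eq with hlt | rfl
    · exact hΔ₂eq hlt
    · rwa [hΔ₂zero le_rfl, gapIntegral_zero hε.le hεω.le hτ₂pos.ne']
  obtain ⟨hgap₁, hΔ₁₂⟩ : Δ₁ = Δ₁ * (U₁ * gapIntegral T ε ω Δ₁) ∧ Δ₁ ≤ Δ₂ := by
    rcases lt_or_ge T τ₁ with hlt | hge
    · have hgap₁ : 1 = U₁ * gapIntegral T ε ω Δ₁ := hΔ₁eq hlt
      exact ⟨by rw [← hgap₁, mul_one],
        le_of_gapIntegral_eq hε hεω.le hT hU₁ hU₁₂ hΔ₂nonneg hgap₁ hgap₂⟩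
    · rw [hΔ₁zero hge]
      exact ⟨(zero_mul _).symm, hΔ₂nonneg⟩
  obtain ⟨u₀, ⟨hu₀cont, hu₀bd⟩, hu₀fix⟩ := exists_fixedPoint_gapOperator hε hεω.le hT hUcont
    (fun x hx ξ hξ => hU₁.le.trans (hUbd x hx ξ hξ).1) hΔ₁nonneg hΔ₁₂
    (fun x hx => le_gapOperator_const hεω.le hT hUcont (fun x hx ξ hξ => (hUbd x hx ξ hξ).1)
      hΔ₁nonneg hgap₁.le hx)
    (fun x hx => gapOperator_const_le hεω.le hT hUcont (fun x hx ξ hξ => (hUbd x hx ξ hξ).2)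
      hΔ₂nonneg (by rw [← hgap₂, mul_one]) hx)
  refine ⟨u₀, hu₀cont, hu₀bd, fun x hx => (hu₀fix x hx).trans ?_⟩
  simp only [gapOperator, gapTerm_eq, mul_assoc]

/-- Existence of a solution u₀ ∈ V_T to the BCS gap equation, with
Δ₁(T) ≤ u₀(x) ≤ Δ₂(T) for all x ∈ [ε, ħω_D]. -/
theorem stmt14 (U₁ U₂ ε ω τ₁ τ₂ : ℝ) (hε : 0 < ε) (hεω : ε < ω)
    (hU₁ : 0 < U₁) (hU₁₂ : U₁ < U₂)
    (U : ℝ → ℝ → ℝ)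
    (hUcont : ContinuousOn (fun p : ℝ × ℝ => U p.1 p.2) (Set.Icc ε ω ×ˢ Set.Icc ε ω))
    (hUbd : ∀ x ∈ Set.Icc ε ω, ∀ ξ ∈ Set.Icc ε ω, U₁ ≤ U x ξ ∧ U x ξ ≤ U₂)
    (hτ₁pos : 0 < τ₁) (hτ₂pos : 0 < τ₂)
    (hτ₁ : 1 = U₁ * ∫ ξ in ε..ω, (1 / ξ) * Real.tanh (ξ / (2 * τ₁)))
    (hτ₂ : 1 = U₂ * ∫ ξ in ε..ω, (1 / ξ) * Real.tanh (ξ / (2 * τ₂)))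
    (T Δ₁ Δ₂ : ℝ) (hT : 0 ≤ T) (hTτ₂ : T ≤ τ₂)
    (hΔ₁nonneg : 0 ≤ Δ₁) (hΔ₂nonneg : 0 ≤ Δ₂)
    (hΔ₁eq : T < τ₁ →
      1 = U₁ * ∫ ξ in ε..ω,
        (1 / Real.sqrt (ξ ^ 2 + Δ₁ ^ 2)) * tanhFac T (Real.sqrt (ξ ^ 2 + Δ₁ ^ 2)))
    (hΔ₁zero : τ₁ ≤ T → Δ₁ = 0)
    (hΔ₂eq : T < τ₂ →
      1 = U₂ * ∫ ξ in ε..ω,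
        (1 / Real.sqrt (ξ ^ 2 + Δ₂ ^ 2)) * tanhFac T (Real.sqrt (ξ ^ 2 + Δ₂ ^ 2)))
    (hΔ₂zero : τ₂ ≤ T → Δ₂ = 0) :
    ∃ u₀ : ℝ → ℝ, ContinuousOn u₀ (Set.Icc ε ω) ∧
      (∀ x ∈ Set.Icc ε ω, Δ₁ ≤ u₀ x ∧ u₀ x ≤ Δ₂) ∧
      ∀ x ∈ Set.Icc ε ω,
        u₀ x = ∫ ξ in ε..ω,
          U x ξ * (u₀ ξ / Real.sqrt (ξ ^ 2 + u₀ ξ ^ 2)) *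
            tanhFac T (Real.sqrt (ξ ^ 2 + u₀ ξ ^ 2)) :=
  stmt14_general U₁ U₂ ε ω τ₁ τ₂ hε hεω hU₁ hU₁₂ U hUcont hUbd hτ₂pos hτ₂ T Δ₁ Δ₂ hT hTτ₂ hΔ₁nonneg
    hΔ₂nonneg hΔ₁eq hΔ₁zero hΔ₂eq hΔ₂zero
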